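/- arXiv:2002.11764 — 3 statements merged into one kernel-verified Lean document; each statement's English description precedes it below -/
import Mathlib

section
/- Let L1 and L2 be operators on a finite-dimensional normed space X depending on a parameter Δ > 0. Suppose (i) L1 is coercive: there exists γ1 > 0 independent of Δ such that γ1‖a − d‖ ≤ ‖L1(a) − L1(d)‖ for all a, d ∈ X; (ii) L1 − L2 is Lipschitz with constant γ2·Δ: ‖(L1(a) − L2(a)) − (L1(d) − L2(d))‖ ≤ γ2·Δ·‖a − d‖ for all a, d; (iii) there exists a unique a* with L2(a*) = 0. Define the DeC iteration by choosing a⁽⁰⁾ ∈ X and letting a⁽ᵏ⁾ be the (assumed existing) solution of L1(a⁽ᵏ⁾) = L1(a⁽ᵏ⁻¹⁾) − L2(a⁽ᵏ⁻¹⁾). Then for every k, ‖a⁽ᵏ⁾ − a*‖ ≤ (γ2Δ/γ1)ᵏ · ‖a⁽⁰⁾ − a*‖; in particular if η := γ2Δ/γ1 < 1 the iterates converge to a*. -/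
theorem stmt_0 {X : Type*} [NormedAddCommGroup X] [NormedSpace ℝ X]
    [FiniteDimensional ℝ X]
    (Δ γ1 γ2 : ℝ) (hΔ : 0 < Δ) (hγ1 : 0 < γ1) (hγ2 : 0 < γ2)
    (L1 L2 : X → X)
    (hcoer : ∀ a d : X, γ1 * ‖a - d‖ ≤ ‖L1 a - L1 d‖)
    (hlip : ∀ a d : X, ‖(L1 a - L2 a) - (L1 d - L2 d)‖ ≤ γ2 * Δ * ‖a - d‖)
    (astar : X) (hstar : L2 astar = 0)
    (huniq : ∀ b : X, L2 b = 0 → b = astar)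
    (a : ℕ → X)
    (hrec : ∀ k : ℕ, L1 (a (k + 1)) = L1 (a k) - L2 (a k)) :
    (∀ k : ℕ, ‖a k - astar‖ ≤ (γ2 * Δ / γ1) ^ k * ‖a 0 - astar‖) ∧
    (γ2 * Δ / γ1 < 1 → Filter.Tendsto a Filter.atTop (nhds astar)) := by
  have hstep : ∀ k : ℕ, ‖a (k + 1) - astar‖ ≤ (γ2 * Δ / γ1) * ‖a k - astar‖ := by
    intro k
    have h1 : γ1 * ‖a (k + 1) - astar‖ ≤ ‖L1 (a (k + 1)) - L1 astar‖ := hcoer _ _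
    have h2 : L1 (a (k + 1)) - L1 astar
        = (L1 (a k) - L2 (a k)) - (L1 astar - L2 astar) := by
      rw [hrec k, hstar]; abel
    have h3 : γ1 * ‖a (k + 1) - astar‖ ≤ γ2 * Δ * ‖a k - astar‖ := by
      calc γ1 * ‖a (k + 1) - astar‖ ≤ ‖L1 (a (k + 1)) - L1 astar‖ := h1
        _ = ‖(L1 (a k) - L2 (a k)) - (L1 astar - L2 astar)‖ := by rw [h2]
        _ ≤ γ2 * Δ * ‖a k - astar‖ := hlip _ _
    rw [div_mul_eq_mul_div, le_div_iff₀ hγ1, mul_comm _ γ1]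
    exact h3
  have hbound : ∀ k : ℕ, ‖a k - astar‖ ≤ (γ2 * Δ / γ1) ^ k * ‖a 0 - astar‖ := by
    intro k
    induction k with
    | zero => simp
    | succ n ih =>
      calc ‖a (n + 1) - astar‖ ≤ (γ2 * Δ / γ1) * ‖a n - astar‖ := hstep n
        _ ≤ (γ2 * Δ / γ1) * ((γ2 * Δ / γ1) ^ n * ‖a 0 - astar‖) := by
            apply mul_le_mul_of_nonneg_left ih
            positivity
        _ = (γ2 * Δ / γ1) ^ (n + 1) * ‖a 0 - astar‖ := by ring
  refine ⟨hbound, fun hlt => ?_⟩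
  have h0 : (0:ℝ) ≤ γ2 * Δ / γ1 := by positivity
  have htend : Filter.Tendsto (fun k => (γ2 * Δ / γ1) ^ k * ‖a 0 - astar‖)
      Filter.atTop (nhds 0) := by
    simpa using (tendsto_pow_atTop_nhds_zero_of_lt_one h0 hlt).mul_const ‖a 0 - astar‖
  have : Filter.Tendsto (fun k => ‖a k - astar‖) Filter.atTop (nhds 0) :=
    squeeze_zero (fun k => norm_nonneg _) hbound htend
  have := tendsto_iff_norm_sub_tendsto_zero.mpr this
  simpa using this
end

section
/- Under the hypotheses of the DeC convergence result (L1 coercive with constant γ1, L1 − L2 Lipschitz with constant γ2·Δt, unique zero a* of L2), suppose additionally that ‖a* − a_ex‖ ≤ C·Δt^(M+1) for a reference element a_ex and some constant C. Then after K iterations starting from a⁽⁰⁾ with ‖a⁽⁰⁾ − a*‖ ≤ C, the DeC iterate satisfies ‖a⁽ᴷ⁾ − a_ex‖ ≤ C·(Δt^(M+1) + β^K Δt^K) with β := γ2/γ1; hence the scheme is accurate of order min(M+1, K). -/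
/-!
Subtracting the DeC update at `a⁽ᵏ⁾` from the same identity at the fixed point `a*` (where
`L2 a* = 0`) gives `L1 a⁽ᵏ⁺¹⁾ - L1 a* = (L1 - L2) a⁽ᵏ⁾ - (L1 - L2) a*`; coercivity of `L1` and the
Lipschitz bound on `L1 - L2` turn this into a contraction by the factor `γ2 Δt / γ1`. After `K`
steps the iterate is within `(β Δt)ᴷ C` of `a*`, which in turn is within `C Δtᴹ⁺¹` of `a_ex`.
-/

section DeferredCorrection

variable {X : Type*} [SeminormedAddCommGroup X] {L1 L2 : X → X} {γ1 ℓ : ℝ}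

theorem dec_step_dist_le (hγ1 : 0 < γ1)
    (hcoer : ∀ a d : X, γ1 * ‖a - d‖ ≤ ‖L1 a - L1 d‖)
    (hlip : ∀ a d : X, ‖(L1 a - L2 a) - (L1 d - L2 d)‖ ≤ ℓ * ‖a - d‖)
    {astar a b : X} (hstar : L2 astar = 0) (hb : L1 b = L1 a - L2 a) :
    ‖b - astar‖ ≤ ℓ / γ1 * ‖a - astar‖ := by
  have hdiff : L1 b - L1 astar = (L1 a - L2 a) - (L1 astar - L2 astar) := by
    rw [hb, hstar, sub_zero]
  rw [div_mul_eq_mul_div, le_div_iff₀' hγ1]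
  calc γ1 * ‖b - astar‖ ≤ ‖L1 b - L1 astar‖ := hcoer b astar
    _ = ‖(L1 a - L2 a) - (L1 astar - L2 astar)‖ := by rw [hdiff]
    _ ≤ ℓ * ‖a - astar‖ := hlip a astar

theorem dec_iterate_dist_le (hγ1 : 0 < γ1) (hℓ : 0 ≤ ℓ)
    (hcoer : ∀ a d : X, γ1 * ‖a - d‖ ≤ ‖L1 a - L1 d‖)
    (hlip : ∀ a d : X, ‖(L1 a - L2 a) - (L1 d - L2 d)‖ ≤ ℓ * ‖a - d‖)
    {astar : X} (hstar : L2 astar = 0) {a : ℕ → X}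
    (hrec : ∀ k : ℕ, L1 (a (k + 1)) = L1 (a k) - L2 (a k)) (K : ℕ) :
    ‖a K - astar‖ ≤ (ℓ / γ1) ^ K * ‖a 0 - astar‖ :=
  le_geom (u := fun k => ‖a k - astar‖) (div_nonneg hℓ hγ1.le) K fun k _ =>
    dec_step_dist_le hγ1 hcoer hlip hstar (hrec k)

end DeferredCorrection

theorem stmt_4_general {X : Type*} [NormedAddCommGroup X]
    (Δt γ1 γ2 C : ℝ) (Mn K : ℕ)
    (hΔt : 0 < Δt) (hγ1 : 0 < γ1) (hγ2 : 0 < γ2)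
    (L1 L2 : X → X)
    (hcoer : ∀ a d : X, γ1 * ‖a - d‖ ≤ ‖L1 a - L1 d‖)
    (hlip : ∀ a d : X, ‖(L1 a - L2 a) - (L1 d - L2 d)‖ ≤ γ2 * Δt * ‖a - d‖)
    (astar aex : X) (hstar : L2 astar = 0)
    (hclose : ‖astar - aex‖ ≤ C * Δt ^ (Mn + 1))
    (a : ℕ → X) (h0 : ‖a 0 - astar‖ ≤ C)
    (hrec : ∀ k : ℕ, L1 (a (k + 1)) = L1 (a k) - L2 (a k)) :
    ‖a K - aex‖ ≤ C * (Δt ^ (Mn + 1) + (γ2 / γ1) ^ K * Δt ^ K) := by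
  have hiter : ‖a K - astar‖ ≤ (γ2 * Δt / γ1) ^ K * C :=
    (dec_iterate_dist_le hγ1 (by positivity) hcoer hlip hstar hrec K).trans
      (mul_le_mul_of_nonneg_left h0 (by positivity))
  have hfactor : (γ2 * Δt / γ1) ^ K = (γ2 / γ1) ^ K * Δt ^ K := by
    rw [mul_div_right_comm, mul_pow]
  calc ‖a K - aex‖ ≤ ‖a K - astar‖ + ‖astar - aex‖ := norm_sub_le_norm_sub_add_norm_sub _ _ _
    _ ≤ (γ2 * Δt / γ1) ^ K * C + C * Δt ^ (Mn + 1) := add_le_add hiter hclose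
    _ = C * (Δt ^ (Mn + 1) + (γ2 / γ1) ^ K * Δt ^ K) := by rw [hfactor]; ring

theorem stmt_4 {X : Type*} [NormedAddCommGroup X] [NormedSpace ℝ X]
    [FiniteDimensional ℝ X]
    (Δt γ1 γ2 C : ℝ) (Mn K : ℕ)
    (hΔt : 0 < Δt) (hγ1 : 0 < γ1) (hγ2 : 0 < γ2) (hC : 0 < C)
    (L1 L2 : X → X)
    (hcoer : ∀ a d : X, γ1 * ‖a - d‖ ≤ ‖L1 a - L1 d‖)
    (hlip : ∀ a d : X, ‖(L1 a - L2 a) - (L1 d - L2 d)‖ ≤ γ2 * Δt * ‖a - d‖)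
    (astar aex : X) (hstar : L2 astar = 0)
    (huniq : ∀ b : X, L2 b = 0 → b = astar)
    (hclose : ‖astar - aex‖ ≤ C * Δt ^ (Mn + 1))
    (a : ℕ → X) (h0 : ‖a 0 - astar‖ ≤ C)
    (hrec : ∀ k : ℕ, L1 (a (k + 1)) = L1 (a k) - L2 (a k)) :
    ‖a K - aex‖ ≤ C * (Δt ^ (Mn + 1) + (γ2 / γ1) ^ K * Δt ^ K) :=
  stmt_4_general Δt γ1 γ2 C Mn K hΔt hγ1 hγ2 L1 L2 hcoer hlip astar aex hstar hclose a h0 hrec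
end

section
/- With L1 and L2 the ADER operators L1(α) := M α − r(α₀·𝟙) and L2(α) := M α − r(α) (M invertible), the DeC update L1(α⁽ᵏ⁾) = L1(α⁽ᵏ⁻¹⁾) − L2(α⁽ᵏ⁻¹⁾) is algebraically equivalent to the fixed-point iteration M α⁽ᵏ⁾ = r(α⁽ᵏ⁻¹⁾), i.e., α⁽ᵏ⁾ = M⁻¹ r(α⁽ᵏ⁻¹⁾). -/
theorem stmt_13 {X : Type*} [NormedAddCommGroup X] [NormedSpace ℝ X]
    (Mop : X ≃L[ℝ] X) (r : X → X) (r0 : X)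
    (L1 L2 : X → X)
    (hL1 : ∀ a, L1 a = Mop a - r0)
    (hL2 : ∀ a, L2 a = Mop a - r a)
    (aprev anew : X) :
    L1 anew = L1 aprev - L2 aprev ↔ anew = Mop.symm (r aprev) := by
  rw [hL1, hL1, hL2]
  constructor
  · intro h
    have hm : Mop anew = r aprev := by
      have : (Mop anew : X) - r0 = r aprev - r0 := by
        rw [h]; abel
      exact sub_left_injective this
    rw [← hm, ContinuousLinearEquiv.symm_apply_apply]
  · intro h
    subst h
    rw [ContinuousLinearEquiv.apply_symm_apply]
    abel
end
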